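/- arXiv:math/0306286 — 3 statements merged into one kernel-verified Lean document; each statement's English description precedes it below -/
import Mathlib

section
/- Let f be a real polynomial of degree k ≥ 2 with k simple real zeros x_1 < x_2 < ... < x_k, and let a, b be real-valued functions, each differentiable on an open neighborhood of x_i, such that f''(x) − 2·a(x)·f'(x) + b(x)·f(x) = 0 for all x in that neighborhood. Then for each i, ∑_{j ≠ i} 1/(x_i − x_j)² = (Δ(x_i) − 2·a'(x_i))/3, where Δ(x) = b(x) − a(x)². -/
/-!
Write `f = (X - x_i) g`, so that `f' = g`, `f'' = 2 g'` and `f''' = 3 g''` at `x_i`. The equation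
at `x_i` gives `g'/g = a`, and its derivative at `x_i` (where `f` vanishes, so `b' f` drops out)
gives `3 g''/g = 4 a² + 2 a' - b`. On the other hand `g = c ∏_{j ≠ i} (X - x_j)`, whose logarithmic
derivatives at `x_i` are `g'/g = ∑ u_j` and `g''/g = (∑ u_j)² - ∑ u_j²` with `u_j = 1/(x_i - x_j)`.
-/

open Polynomial Filter Topology

namespace Polynomial

section Algebra

variable {R : Type*} [CommRing R]

theorem derivative_X_sub_C_mul (r : R) (g : R[X]) :
    derivative ((X - C r) * g) = g + (X - C r) * derivative g := by
  rw [derivative_mul, derivative_X_sub_C, one_mul]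

theorem iterate_derivative_X_sub_C_mul (r : R) (g : R[X]) (n : ℕ) :
    derivative^[n + 1] ((X - C r) * g)
      = (X - C r) * derivative^[n + 1] g + (n + 1 : R[X]) * derivative^[n] g := by
  induction n with
  | zero => simp [add_comm]
  | succ n ih =>
    rw [Function.iterate_succ_apply', ih, derivative_add, derivative_X_sub_C_mul,
      derivative_mul, Function.iterate_succ_apply' _ (n + 1), Function.iterate_succ_apply' _ n]
    push_cast
    simp only [derivative_add, derivative_natCast, derivative_one, add_zero, zero_mul, zero_add]
    ring

theorem eval_iterate_derivative_X_sub_C_mul (r : R) (g : R[X]) (n : ℕ) :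
    (derivative^[n + 1] ((X - C r) * g)).eval r = (n + 1) * (derivative^[n] g).eval r := by
  simp [iterate_derivative_X_sub_C_mul]

end Algebra

section Field

variable {K : Type*} [Field K] {ι : Type*}

theorem eval_derivative_prod_X_sub_C (s : Finset ι) (y : ι → K) {r : K}
    (hr : ∀ j ∈ s, y j ≠ r) :
    (derivative (∏ j ∈ s, (X - C (y j)))).eval r
      = (∏ j ∈ s, (X - C (y j))).eval r * ∑ j ∈ s, (r - y j)⁻¹ := by
  classical
  induction s using Finset.induction_on with
  | empty => simp
  | insert j s hj ih =>
    rw [Finset.forall_mem_insert] at hr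
    have hjr : r - y j ≠ 0 := sub_ne_zero.2 hr.1.symm
    rw [Finset.prod_insert hj, Finset.sum_insert hj, derivative_X_sub_C_mul]
    simp only [eval_add, eval_mul, eval_sub, eval_X, eval_C, ih hr.2]
    field_simp

theorem eval_derivative_derivative_prod_X_sub_C (s : Finset ι) (y : ι → K) {r : K}
    (hr : ∀ j ∈ s, y j ≠ r) :
    (derivative (derivative (∏ j ∈ s, (X - C (y j))))).eval r
      = (∏ j ∈ s, (X - C (y j))).eval r
        * ((∑ j ∈ s, (r - y j)⁻¹) ^ 2 - ∑ j ∈ s, ((r - y j) ^ 2)⁻¹) := by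
  classical
  induction s using Finset.induction_on with
  | empty => simp
  | insert j s hj ih =>
    rw [Finset.forall_mem_insert] at hr
    have hjr : r - y j ≠ 0 := sub_ne_zero.2 hr.1.symm
    rw [Finset.prod_insert hj, Finset.sum_insert hj, Finset.sum_insert hj,
      derivative_X_sub_C_mul, derivative_add, derivative_X_sub_C_mul]
    simp only [eval_add, eval_mul, eval_sub, eval_X, eval_C, ih hr.2,
      eval_derivative_prod_X_sub_C s y hr.2]
    field_simp
    ring

end Field

theorem eq_C_leadingCoeff_mul_prod_X_sub_C {R ι : Type*} [CommRing R] [IsDomain R] [Fintype ι]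
    {f : R[X]} {x : ι → R} (hx : Function.Injective x) (hdeg : f.natDegree = Fintype.card ι)
    (hroot : ∀ i, f.IsRoot (x i)) :
    f = C f.leadingCoeff * ∏ i, (X - C (x i)) := by
  rcases eq_or_ne f 0 with rfl | hf
  · simp
  have hle : Finset.univ.val.map x ≤ f.roots :=
    (Multiset.le_iff_subset (Finset.univ.nodup.map hx)).2 fun r hr => by
      obtain ⟨i, -, rfl⟩ := Multiset.mem_map.1 hr
      exact (mem_roots hf).2 (hroot i)
  have hroots : Finset.univ.val.map x = f.roots :=
    Multiset.eq_of_le_of_card_le hle (by simpa [hdeg] using card_roots' f)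
  conv_lhs =>
    rw [← C_leadingCoeff_mul_prod_multiset_X_sub_C (p := f) (by rw [← hroots]; simp [hdeg])]
  rw [← hroots, Multiset.map_map]
  rfl

section BetheAnsatz

variable {f g : ℝ[X]} {r : ℝ} {a b : ℝ → ℝ}

theorem eval_derivative_cofactor_of_ode (hf : f = (X - C r) * g)
    (hode : (derivative (derivative f)).eval r - 2 * a r * (derivative f).eval r
      + b r * f.eval r = 0) :
    (derivative g).eval r = a r * g.eval r := by
  have h1 := eval_iterate_derivative_X_sub_C_mul r g 0
  have h2 := eval_iterate_derivative_X_sub_C_mul r g 1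
  simp only [Function.iterate_succ_apply', Function.iterate_zero_apply, ← hf] at h1 h2
  have h0 : f.eval r = 0 := by simp [hf]
  rw [h0] at hode
  linear_combination (hode - h2) / 2 + a r * h1

theorem eval_derivative_derivative_cofactor_of_ode (hf : f = (X - C r) * g)
    (hode : ∀ᶠ y in 𝓝 r, (derivative (derivative f)).eval y - 2 * a y * (derivative f).eval y
      + b y * f.eval y = 0)
    (ha : DifferentiableAt ℝ a r) (hb : DifferentiableAt ℝ b r) :
    3 * (derivative (derivative g)).eval r = (4 * a r ^ 2 + 2 * deriv a r - b r) * g.eval r := by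
  have hode' : (derivative (derivative (derivative f))).eval r
      - 2 * (deriv a r * (derivative f).eval r + a r * (derivative (derivative f)).eval r)
      + (deriv b r * f.eval r + b r * (derivative f).eval r) = 0 := by
    have hF := ((Polynomial.hasDerivAt (derivative (derivative f)) r).sub
      ((ha.hasDerivAt.const_mul 2).mul (Polynomial.hasDerivAt (derivative f) r))).add
      (hb.hasDerivAt.mul (Polynomial.hasDerivAt f r))
    have := (hF.congr_of_eventuallyEq (hode.mono fun y hy => hy.symm)).unique
      (hasDerivAt_const r (0 : ℝ))
    linear_combination this
  have h1 := eval_iterate_derivative_X_sub_C_mul r g 0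
  have h2 := eval_iterate_derivative_X_sub_C_mul r g 1
  have h3 := eval_iterate_derivative_X_sub_C_mul r g 2
  simp only [Function.iterate_succ_apply', Function.iterate_zero_apply, ← hf] at h1 h2 h3
  have hg' := eval_derivative_cofactor_of_ode hf hode.self_of_nhds
  have h0 : f.eval r = 0 := by simp [hf]
  rw [h0, h1, h2, h3, hg'] at hode'
  linear_combination hode'

theorem sum_inv_sq_sub_eq_of_ode {ι : Type*} {s : Finset ι} {y : ι → ℝ} {c : ℝ}
    (hf : f = (X - C r) * (C c * ∏ j ∈ s, (X - C (y j)))) (hc : c ≠ 0)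
    (hr : ∀ j ∈ s, y j ≠ r)
    (hode : ∀ᶠ t in 𝓝 r, (derivative (derivative f)).eval t - 2 * a t * (derivative f).eval t
      + b t * f.eval t = 0)
    (ha : DifferentiableAt ℝ a r) (hb : DifferentiableAt ℝ b r) :
    ∑ j ∈ s, ((r - y j) ^ 2)⁻¹ = ((b r - a r ^ 2) - 2 * deriv a r) / 3 := by
  have h1 := eval_derivative_cofactor_of_ode hf hode.self_of_nhds
  have h2 := eval_derivative_derivative_cofactor_of_ode hf hode ha hb
  simp only [derivative_C_mul, eval_C_mul, eval_derivative_prod_X_sub_C s y hr,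
    eval_derivative_derivative_prod_X_sub_C s y hr] at h1 h2
  have hP : c * (∏ j ∈ s, (X - C (y j))).eval r ≠ 0 := by
    refine mul_ne_zero hc ?_
    simpa [eval_prod, Finset.prod_eq_zero_iff, sub_eq_zero] using fun j hj h => hr j hj h.symm
  have hp : ∑ j ∈ s, (r - y j)⁻¹ = a r := mul_left_cancel₀ hP (by linear_combination h1)
  rw [hp] at h2
  exact mul_left_cancel₀ hP (by linear_combination -h2 / 3)

end BetheAnsatz

end Polynomial

theorem bethe_ansatz_second_negative_moment_general
    (k : ℕ) (f : Polynomial ℝ) (hdeg : f.natDegree = k)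
    (x : Fin k → ℝ) (hmono : StrictMono x)
    (hroot : ∀ i : Fin k, f.eval (x i) = 0)
    (a b : ℝ → ℝ)
    (hode : ∀ i : Fin k, ∃ U : Set ℝ, IsOpen U ∧ x i ∈ U ∧
      DifferentiableOn ℝ a U ∧ DifferentiableOn ℝ b U ∧
      ∀ y ∈ U, deriv (deriv (fun t => f.eval t)) y
        - 2 * a y * deriv (fun t => f.eval t) y + b y * f.eval y = 0) :
    ∀ i : Fin k,
      ∑ j ∈ Finset.univ.erase i, 1 / (x i - x j) ^ 2
        = ((b (x i) - (a (x i)) ^ 2) - 2 * deriv a (x i)) / 3 := by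
  intro i
  obtain ⟨U, hU, hxU, ha, hb, hodeU⟩ := hode i
  have hUx : U ∈ 𝓝 (x i) := hU.mem_nhds hxU
  have hf0 : f ≠ 0 := ne_zero_of_natDegree_gt (hdeg ▸ i.pos)
  have hf := eq_C_leadingCoeff_mul_prod_X_sub_C hmono.injective (by simpa using hdeg) hroot
  rw [← Finset.mul_prod_erase _ _ (Finset.mem_univ i), mul_left_comm] at hf
  have hderiv (p : ℝ[X]) : deriv (fun t => p.eval t) = fun t => p.derivative.eval t :=
    funext fun _ => p.deriv
  simp only [one_div]
  refine sum_inv_sq_sub_eq_of_ode hf (leadingCoeff_ne_zero.2 hf0)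
    (fun j hj => hmono.injective.ne (Finset.ne_of_mem_erase hj)) ?_
    (ha.differentiableAt hUx) (hb.differentiableAt hUx)
  filter_upwards [hUx] with y hy
  simpa only [hderiv] using hodeU y hy

/-- **Bethe ansatz equation.** Let `f` be a real polynomial of degree `k ≥ 2` with `k`
simple real zeros `x 0 < x 1 < ... < x (k-1)`, and let `a, b` be real-valued functions,
each differentiable on an open neighborhood of `x i`, such that
`f'' - 2 a f' + b f = 0` on that neighborhood.  Then for each `i`,
`∑_{j ≠ i} 1/(x i - x j)² = (Δ(x i) - 2 a'(x i))/3` where `Δ y = b y - (a y)²`. -/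
theorem bethe_ansatz_second_negative_moment
    (k : ℕ) (hk : 2 ≤ k) (f : Polynomial ℝ) (hdeg : f.natDegree = k)
    (x : Fin k → ℝ) (hmono : StrictMono x)
    (hroot : ∀ i : Fin k, f.eval (x i) = 0)
    (a b : ℝ → ℝ)
    (hode : ∀ i : Fin k, ∃ U : Set ℝ, IsOpen U ∧ x i ∈ U ∧
      DifferentiableOn ℝ a U ∧ DifferentiableOn ℝ b U ∧
      ∀ y ∈ U, deriv (deriv (fun t => f.eval t)) y
        - 2 * a y * deriv (fun t => f.eval t) y + b y * f.eval y = 0) :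
    ∀ i : Fin k,
      ∑ j ∈ Finset.univ.erase i, 1 / (x i - x j) ^ 2
        = ((b (x i) - (a (x i)) ^ 2) - 2 * deriv a (x i)) / 3 :=
  bethe_ansatz_second_negative_moment_general k f hdeg x hmono hroot a b hode
end

section
/- Let α ≥ β > −1, let x_1 be the least zero of the Jacobi polynomial P_k^{(α,β)}, and define Δ(x) = p(x − A)(B − x)/(4(1 − x²)²), where p = r² + 2s + 1, s = α+β+1, q = α−β, r = 2k+α+β+1, R = √((r²−q²+2s+1)(r²−s²)), A = −(R + q(s+1))/p, and B = (R − q(s+1))/p. Then for every real x with A < x < x_1, one has Δ(x_1) − Δ(x) < R·(x_1 − x)/(2(1 − x_1²)²). -/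
noncomputable def jacobi (k : ℕ) (α β : ℝ) (x : ℝ) : ℝ :=
  ∑ i ∈ Finset.range (k + 1),
    ((∏ j ∈ Finset.range (k - i), (α + (i : ℝ) + (j : ℝ) + 1)) /
      (Nat.factorial (k - i))) *
    ((∏ j ∈ Finset.range i, (β + ((k - i : ℕ) : ℝ) + (j : ℝ) + 1)) /
      (Nat.factorial i)) *
    ((x - 1) / 2) ^ i * ((x + 1) / 2) ^ (k - i)

lemma jacobi_pos_of_one_le (k : ℕ) (α β : ℝ) (hα : -1 < α) (hβ : -1 < β)
    (y : ℝ) (hy : 1 ≤ y) : 0 < jacobi k α β y := by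
  unfold jacobi
  apply Finset.sum_pos'
  · intro i _
    have h1 : 0 < ∏ j ∈ Finset.range (k - i), (α + (i : ℝ) + (j : ℝ) + 1) :=
      Finset.prod_pos fun j _ => by
        have := Nat.cast_nonneg (α := ℝ) i
        have := Nat.cast_nonneg (α := ℝ) j
        linarith
    have h2 : 0 < ∏ j ∈ Finset.range i, (β + ((k - i : ℕ) : ℝ) + (j : ℝ) + 1) :=
      Finset.prod_pos fun j _ => by
        have := Nat.cast_nonneg (α := ℝ) (k - i)
        have := Nat.cast_nonneg (α := ℝ) j
        linarith
    have h3 : (0:ℝ) < Nat.factorial (k - i) := by exact_mod_cast Nat.factorial_pos _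
    have h4 : (0:ℝ) < Nat.factorial i := by exact_mod_cast Nat.factorial_pos _
    have h5 : (0:ℝ) ≤ ((y - 1) / 2) ^ i := pow_nonneg (by linarith) i
    have h6 : (0:ℝ) ≤ ((y + 1) / 2) ^ (k - i) := pow_nonneg (by linarith) _
    have := div_pos h1 h3
    have := div_pos h2 h4
    positivity
  · refine ⟨0, Finset.mem_range.mpr (Nat.succ_pos k), ?_⟩
    have h1 : 0 < ∏ j ∈ Finset.range (k - 0), (α + ((0:ℕ) : ℝ) + (j : ℝ) + 1) :=
      Finset.prod_pos fun j _ => by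
        have := Nat.cast_nonneg (α := ℝ) j
        simp only [Nat.cast_zero]
        linarith
    have h2 : 0 < ∏ j ∈ Finset.range 0, (β + ((k - 0 : ℕ) : ℝ) + (j : ℝ) + 1) := by simp
    have h3 : (0:ℝ) < Nat.factorial (k - 0) := by exact_mod_cast Nat.factorial_pos _
    have h4 : (0:ℝ) < Nat.factorial 0 := by exact_mod_cast Nat.factorial_pos _
    have h5 : (0:ℝ) < ((y - 1) / 2) ^ (0:ℕ) := by simp
    have h6 : (0:ℝ) < ((y + 1) / 2) ^ (k - 0) := pow_pos (by linarith) _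
    have := div_pos h1 h3
    have := div_pos h2 h4
    positivity

set_option maxHeartbeats 1000000 in
lemma jac_key_id (p R u x x1 : ℝ) (hp : p ≠ 0) (hx : 1 - x ^ 2 ≠ 0) (hx1 : 1 - x1 ^ 2 ≠ 0) :
    R * (x1 - x) / (2 * (1 - x1 ^ 2) ^ 2) -
      (p * (x1 - -(R + u) / p) * ((R - u) / p - x1) / (4 * (1 - x1 ^ 2) ^ 2) -
       p * (x - -(R + u) / p) * ((R - u) / p - x) / (4 * (1 - x ^ 2) ^ 2)) =
    (x1 - x) * (((R + u + p * x) * (x1 + x) + p * (1 - x ^ 2)) *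
        ((R + u + p * x1) * (1 - x ^ 2) + (R + u + p * x) * (1 - x1 ^ 2)) -
      2 * R * (R + u + p * x) * (x1 + x) * ((1 - x ^ 2) + (1 - x1 ^ 2))) /
    (4 * p * (1 - x ^ 2) ^ 2 * (1 - x1 ^ 2) ^ 2) := by
  field_simp
  ring

set_option maxHeartbeats 1000000 in
/-- Discriminant difference bound at the least Jacobi zero: for `A < x < x₁`,
`Δ(x₁) − Δ(x) < R (x₁ − x)/(2(1 − x₁²)²)`, where
`Δ(x) = p (x − A)(B − x)/(4(1 − x²)²)` and `p = r² + 2s + 1`. -/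
theorem jacobi_discriminant_diff_least
    (k : ℕ) (hk : 1 ≤ k) (α β : ℝ) (hβ : -1 < β) (hαβ : β ≤ α)
    (s q r R : ℝ)
    (hs : s = α + β + 1) (hq : q = α - β) (hr : r = 2 * (k : ℝ) + α + β + 1)
    (hR : R = Real.sqrt ((r ^ 2 - q ^ 2 + 2 * s + 1) * (r ^ 2 - s ^ 2)))
    (p : ℝ) (hp : p = r ^ 2 + 2 * s + 1)
    (A : ℝ) (hA : A = -(R + q * (s + 1)) / p)
    (B : ℝ) (hB : B = (R - q * (s + 1)) / p)
    (Δ : ℝ → ℝ) (hΔ : ∀ y : ℝ, Δ y = p * (y - A) * (B - y) / (4 * (1 - y ^ 2) ^ 2))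
    (x1 : ℝ) (hroot : jacobi k α β x1 = 0)
    (hmin : ∀ y : ℝ, jacobi k α β y = 0 → x1 ≤ y) :
    ∀ x : ℝ, A < x → x < x1 →
      Δ x1 - Δ x < R * (x1 - x) / (2 * (1 - x1 ^ 2) ^ 2) := by
  intro x hAx hxx1
  have hα : -1 < α := lt_of_lt_of_le hβ hαβ
  have hk1 : (1:ℝ) ≤ (k:ℝ) := by exact_mod_cast hk
  have hR0 : 0 ≤ R := hR ▸ Real.sqrt_nonneg _
  have hu0 : 0 ≤ q * (s + 1) := by
    have h1 : 0 ≤ q := by rw [hq]; linarith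
    have h2 : 0 < s + 1 := by rw [hs]; linarith
    positivity
  have hXY : (r ^ 2 - q ^ 2 + 2 * s + 1) * (r ^ 2 - s ^ 2)
      ≤ (((r ^ 2 - q ^ 2 + 2 * s + 1) + (r ^ 2 - s ^ 2)) / 2) ^ 2 := by
    nlinarith [sq_nonneg ((r ^ 2 - q ^ 2 + 2 * s + 1) - (r ^ 2 - s ^ 2))]

  have hXpos : 0 < r ^ 2 - q ^ 2 + 2 * s + 1 := by
    rw [hr, hq, hs]
    nlinarith [mul_pos (by linarith : (0:ℝ) < 2*(k:ℝ)+2*β+1) (by linarith : (0:ℝ) < 2*(k:ℝ)+2*α+1),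
      mul_pos (by linarith : (0:ℝ) < α+1) (by linarith : (0:ℝ) < β+1)]
  have hYpos : 0 < r ^ 2 - s ^ 2 := by
    rw [hr, hs]
    nlinarith [mul_pos (by linarith : (0:ℝ) < 2*(k:ℝ)) (by linarith : (0:ℝ) < 2*(k:ℝ)+2*(α+β+1))]
  have hXYpos : 0 ≤ ((r ^ 2 - q ^ 2 + 2 * s + 1) + (r ^ 2 - s ^ 2)) / 2 := by linarith
  have hRle : R ≤ ((r ^ 2 - q ^ 2 + 2 * s + 1) + (r ^ 2 - s ^ 2)) / 2 := by
    rw [hR]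
    calc Real.sqrt ((r ^ 2 - q ^ 2 + 2 * s + 1) * (r ^ 2 - s ^ 2))
        ≤ Real.sqrt ((((r ^ 2 - q ^ 2 + 2 * s + 1) + (r ^ 2 - s ^ 2)) / 2) ^ 2) :=
          Real.sqrt_le_sqrt hXY
      _ = ((r ^ 2 - q ^ 2 + 2 * s + 1) + (r ^ 2 - s ^ 2)) / 2 := Real.sqrt_sq hXYpos
  have hqs : q < s + 1 := by rw [hq, hs]; linarith
  have hRup : R + q * (s + 1) < p := by
    linarith [hRle, mul_pos (sub_pos.mpr hqs) (sub_pos.mpr hqs), hp]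
  have hppos : 0 < p := by linarith [hRup, hR0, hu0]
  have hx1lt1 : x1 < 1 := by
    by_contra h
    push_neg at h
    exact absurd hroot (ne_of_gt (jacobi_pos_of_one_le k α β hα hβ x1 h))
  have hAgt : (-1:ℝ) < A := by
    rw [hA, lt_div_iff₀ hppos]; linarith
  have hxm1 : (-1:ℝ) < x := lt_trans hAgt hAx
  have hx1m1 : (-1:ℝ) < x1 := lt_trans hxm1 hxx1
  have hxlt1 : x < 1 := lt_trans hxx1 hx1lt1
  have hdxpos : 0 < (1 - x ^ 2) := by
    nlinarith [mul_pos (by linarith : (0:ℝ) < 1 - x) (by linarith : (0:ℝ) < 1 + x)]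
  have hd1pos : 0 < (1 - x1 ^ 2) := by
    nlinarith [mul_pos (by linarith : (0:ℝ) < 1 - x1) (by linarith : (0:ℝ) < 1 + x1)]
  have hapos : 0 < (R + q * (s + 1) + p * x) := by
    have h1 := hAx
    rw [hA, div_lt_iff₀ hppos] at h1
    linarith [h1]
  have haa1 : (R + q * (s + 1) + p * x) < (R + q * (s + 1) + p * x1) := by linarith [mul_pos hppos (sub_pos.mpr hxx1)]
  have haup : (R + q * (s + 1) + p * x) < p * (1 + x) := by linarith [hRup]
  have hKpos : 0 < ((R + q * (s + 1) + p * x) * (x1 + x) + p * (1 - x ^ 2)) := by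
    rcases le_or_gt (x1 + x) 0 with h | h
    · have h2 : (p * (1 + x)) * (x1 + x) ≤ (R + q * (s + 1) + p * x) * (x1 + x) :=
        mul_le_mul_of_nonpos_right haup.le h
      have h3 : 0 < p * (1 + x) * (1 + x1) :=
        mul_pos (mul_pos hppos (by linarith)) (by linarith)
      linarith [h2, h3]
    · linarith [mul_pos hapos h, mul_pos hppos hdxpos]
  have hHpos : 0 < (((R + q * (s + 1) + p * x) * (x1 + x) + p * (1 - x ^ 2)) * ((R + q * (s + 1) + p * x1) * (1 - x ^ 2) + (R + q * (s + 1) + p * x) * (1 - x1 ^ 2)) - 2 * R * (R + q * (s + 1) + p * x) * (x1 + x) * ((1 - x ^ 2) + (1 - x1 ^ 2))) := by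
    have had : 0 < (R + q * (s + 1) + p * x1) * (1 - x ^ 2) + (R + q * (s + 1) + p * x) * (1 - x1 ^ 2) :=
      add_pos (mul_pos (lt_trans hapos haa1) hdxpos) (mul_pos hapos hd1pos)
    rcases le_or_gt (x1 + x) 0 with h | h
    · linarith [mul_pos hKpos had,
        mul_nonneg (mul_nonneg (mul_nonneg (by linarith : (0:ℝ) ≤ 2 * R) hapos.le)
          (by linarith : (0:ℝ) ≤ -(x1+x))) (by positivity : (0:ℝ) ≤ (1 - x ^ 2) + (1 - x1 ^ 2))]
    · have hS : 0 < (R + q * (s + 1) + p * x) * (x1 + x) + p * (1 - x ^ 2) - 2 * R * (x1 + x) := by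
        linarith [mul_nonneg hu0 h.le, mul_pos (by linarith : (0:ℝ) < p - q * (s + 1) - R) h,
          mul_pos (mul_pos hppos (by linarith : (0:ℝ) < 1 - x)) (by linarith : (0:ℝ) < 1 - x1)]
      linarith [mul_pos (mul_pos hapos (by positivity : (0:ℝ) < (1 - x ^ 2) + (1 - x1 ^ 2))) hS,
        mul_pos (mul_pos hKpos hdxpos) (by linarith : (0:ℝ) < (R + q * (s + 1) + p * x1) - (R + q * (s + 1) + p * x))]
  have heq := jac_key_id p R (q * (s + 1)) x x1 hppos.ne' hdxpos.ne' hd1pos.ne'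
  rw [hΔ, hΔ, hA, hB]
  have hfrac : 0 < (x1 - x) * (((R + q * (s + 1) + p * x) * (x1 + x) + p * (1 - x ^ 2)) * ((R + q * (s + 1) + p * x1) * (1 - x ^ 2) + (R + q * (s + 1) + p * x) * (1 - x1 ^ 2)) - 2 * R * (R + q * (s + 1) + p * x) * (x1 + x) * ((1 - x ^ 2) + (1 - x1 ^ 2))) /
      (4 * p * (1 - x ^ 2) ^ 2 * (1 - x1 ^ 2) ^ 2) := by
    apply div_pos (mul_pos (by linarith) hHpos)
    positivity
  linarith [heq, hfrac]
end

section
/- Let α > −1. Then every real zero x of the generalized Laguerre polynomial L_k^{(α)} satisfies V² < x < U², where V = √(k+α+1) − √k and U = √(k+α+1) + √k. -/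
/-- The generalized Laguerre polynomial `L_k^{(α)}` as a real function:
`L_k^{(α)}(x) = ∑_{i=0}^{k} ((−1)^i / i!) · (∏_{j=1}^{k−i} (α + i + j))/(k−i)! · x^i`. -/
noncomputable def laguerre (k : ℕ) (α : ℝ) (x : ℝ) : ℝ :=
  ∑ i ∈ Finset.range (k + 1),
    ((-1 : ℝ) ^ i / (Nat.factorial i)) *
      ((∏ j ∈ Finset.range (k - i), (α + (i : ℝ) + (j : ℝ) + 1)) /
        (Nat.factorial (k - i))) * x ^ i

noncomputable def lagT (α : ℝ) (k i : ℕ) : ℝ :=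
  if i ≤ k then ((-1 : ℝ) ^ i / (Nat.factorial i)) *
      ((∏ j ∈ Finset.range (k - i), (α + (i : ℝ) + (j : ℝ) + 1)) /
        (Nat.factorial (k - i))) else 0

lemma laguerre_eq_sum (k N : ℕ) (h : k < N) (α x : ℝ) :
    laguerre k α x = ∑ i ∈ Finset.range N, lagT α k i * x ^ i := by
  rw [laguerre]
  rw [show (∑ i ∈ Finset.range (k+1),
    ((-1 : ℝ) ^ i / (Nat.factorial i)) *
      ((∏ j ∈ Finset.range (k - i), (α + (i : ℝ) + (j : ℝ) + 1)) /
        (Nat.factorial (k - i))) * x ^ i) = ∑ i ∈ Finset.range (k+1), lagT α k i * x ^ i from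
    Finset.sum_congr rfl (by
      intro i hi
      rw [lagT, if_pos (Nat.lt_succ_iff.mp (Finset.mem_range.mp hi))])]
  exact Finset.sum_subset (Finset.range_subset_range.mpr h) (by
    intro i _ hi
    have : ¬ i ≤ k := fun hik => hi (Finset.mem_range.mpr (Nat.lt_succ_of_le hik))
    rw [lagT, if_neg this]
    ring)

noncomputable def lagSh (α : ℝ) (m : ℕ) : ℕ → ℝ
  | 0 => 0
  | j+1 => lagT α m j

lemma lagT_rec (m : ℕ) (α : ℝ) (i : ℕ) (hi : i < m + 3) :
    ((m:ℝ)+2) * lagT α (m+2) i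
      = (2*(m:ℝ)+3+α) * lagT α (m+1) i - lagSh α (m+1) i
        - ((m:ℝ)+1+α) * lagT α m i := by
  have fne : ∀ n : ℕ, ((Nat.factorial n : ℝ)) ≠ 0 := fun n =>
    Nat.cast_ne_zero.mpr (Nat.factorial_ne_zero n)
  cases i with
  | zero =>
    show ((m:ℝ)+2) * lagT α (m+2) 0
      = (2*(m:ℝ)+3+α) * lagT α (m+1) 0 - lagSh α (m+1) 0 - ((m:ℝ)+1+α) * lagT α m 0
    simp only [lagT, lagSh, if_pos (Nat.zero_le _), Nat.sub_zero]
    have h2 : (∏ j ∈ Finset.range (m+2), (α + ((0:ℕ):ℝ) + (j:ℝ) + 1))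
        = (∏ j ∈ Finset.range m, (α + ((0:ℕ):ℝ) + (j:ℝ) + 1)) * ((α + m + 1) * (α + m + 2)) := by
      rw [show m+2 = (m+1)+1 by omega, Finset.prod_range_succ, Finset.prod_range_succ]
      push_cast; ring
    have h1 : (∏ j ∈ Finset.range (m+1), (α + ((0:ℕ):ℝ) + (j:ℝ) + 1))
        = (∏ j ∈ Finset.range m, (α + ((0:ℕ):ℝ) + (j:ℝ) + 1)) * (α + m + 1) := by
      rw [Finset.prod_range_succ]; push_cast; ring
    rw [h2, h1]
    simp only [Nat.factorial_succ, Nat.factorial_zero]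
    push_cast
    field_simp
    ring
  | succ j =>
    show ((m:ℝ)+2) * lagT α (m+2) (j+1)
      = (2*(m:ℝ)+3+α) * lagT α (m+1) (j+1) - lagSh α (m+1) (j+1) - ((m:ℝ)+1+α) * lagT α m (j+1)
    rw [show lagSh α (m+1) (j+1) = lagT α (m+1) j from rfl]
    rcases Nat.lt_or_ge j m with hj | hj
    · -- j+1 ≤ m, write m = j+1+t
      obtain ⟨t, ht⟩ : ∃ t, m = j + 1 + t := ⟨m - (j+1), by omega⟩
      subst ht
      have e2 : j + 1 + t + 2 - (j+1) = t + 2 := by omega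
      have e1 : j + 1 + t + 1 - (j+1) = t + 1 := by omega
      have e0 : j + 1 + t - (j+1) = t := by omega
      have esh : j + 1 + t + 1 - j = t + 2 := by omega
      simp only [lagT, if_pos (by omega : j + 1 ≤ j+1+t+2), if_pos (by omega : j + 1 ≤ j+1+t+1),
        if_pos (by omega : j + 1 ≤ j+1+t), if_pos (by omega : j ≤ j+1+t+1), e2, e1, e0, esh]
      have hB2 : (∏ l ∈ Finset.range (t+2), (α + ((j+1:ℕ):ℝ) + (l:ℝ) + 1))
          = (∏ l ∈ Finset.range t, (α + ((j+1:ℕ):ℝ) + (l:ℝ) + 1))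
            * ((α + j + t + 2) * (α + j + t + 3)) := by
        rw [show t+2 = (t+1)+1 by omega, Finset.prod_range_succ, Finset.prod_range_succ]
        push_cast; ring
      have hB1 : (∏ l ∈ Finset.range (t+1), (α + ((j+1:ℕ):ℝ) + (l:ℝ) + 1))
          = (∏ l ∈ Finset.range t, (α + ((j+1:ℕ):ℝ) + (l:ℝ) + 1)) * (α + j + t + 2) := by
        rw [Finset.prod_range_succ]; push_cast; ring
      have hBsh : (∏ l ∈ Finset.range (t+2), (α + (j:ℝ) + (l:ℝ) + 1))
          = (α + j + 1) * ((∏ l ∈ Finset.range t, (α + ((j+1:ℕ):ℝ) + (l:ℝ) + 1)) * (α + j + t + 2)) := by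
        rw [Finset.prod_range_succ', Finset.prod_range_succ,
          Finset.prod_congr rfl (fun x _ => by push_cast; ring :
            ∀ x ∈ Finset.range t, (α + (j:ℝ) + ((x+1:ℕ):ℝ) + 1) = (α + ((j+1:ℕ):ℝ) + (x:ℝ) + 1))]
        push_cast; ring
      rw [hB2, hB1, hBsh]
      simp only [Nat.factorial_succ]
      push_cast
      field_simp
      ring
    ·
      have : j = m ∨ j = m + 1 := by omega
      rcases this with rfl | rfl
      · -- i = m+1
        have h0 : ¬ (j + 1 ≤ j) := by omega
        simp only [lagT, if_pos (by omega : j + 1 ≤ j+2), if_pos (le_refl (j+1)),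
          if_neg h0, if_pos (by omega : j ≤ j+1),
          show j+2-(j+1) = 1 by omega, show j+1-(j+1) = 0 by omega, show j+1-j = 1 by omega]
        simp only [Finset.prod_range_one, Finset.prod_range_zero, Nat.factorial_succ,
          Nat.factorial_zero, Nat.factorial_one]
        push_cast
        field_simp
        ring
      · -- i = m+2
        simp only [lagT, if_pos (le_refl (m+2)), if_neg (by omega : ¬ (m+2 ≤ m+1)),
          if_neg (by omega : ¬ (m+2 ≤ m)), if_pos (le_refl (m+1)),
          show m+2-(m+2) = 0 by omega, show m+1-(m+1) = 0 by omega]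
        simp only [Finset.prod_range_zero, Nat.factorial_zero, Nat.factorial_succ]
        push_cast
        field_simp
        ring


lemma lag_rec (m : ℕ) (α x : ℝ) :
    ((m:ℝ)+2) * laguerre (m+2) α x
      = (2*(m:ℝ)+3+α - x) * laguerre (m+1) α x - ((m:ℝ)+1+α) * laguerre m α x := by
  have hsh : x * laguerre (m+1) α x
      = ∑ i ∈ Finset.range (m+3), lagSh α (m+1) i * x ^ i := by
    rw [laguerre_eq_sum (m+1) (m+2) (by omega) α x, Finset.mul_sum,
      Finset.sum_range_succ' (fun i => lagSh α (m+1) i * x ^ i) (m+2)]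
    rw [show lagSh α (m+1) 0 * x ^ 0 = 0 by simp [lagSh], add_zero]
    exact Finset.sum_congr rfl fun i _ => by
      rw [show lagSh α (m+1) (i+1) = lagT α (m+1) i from rfl]; ring
  have key : ((m:ℝ)+2) * laguerre (m+2) α x
      = (2*(m:ℝ)+3+α) * laguerre (m+1) α x - x * laguerre (m+1) α x
        - ((m:ℝ)+1+α) * laguerre m α x := by
    rw [laguerre_eq_sum (m+2) (m+3) (by omega) α x, laguerre_eq_sum (m+1) (m+3) (by omega) α x,
      laguerre_eq_sum m (m+3) (by omega) α x] at *
    rw [hsh, Finset.mul_sum, Finset.mul_sum, Finset.mul_sum, ← Finset.sum_sub_distrib,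
      ← Finset.sum_sub_distrib]
    refine Finset.sum_congr rfl fun i hi => ?_
    have h := lagT_rec m α i (Finset.mem_range.mp hi)
    calc ((m:ℝ)+2) * (lagT α (m+2) i * x^i)
        = (((m:ℝ)+2) * lagT α (m+2) i) * x^i := by ring
      _ = _ := by rw [h]; ring
  linarith [key]

noncomputable def lagQ (α x : ℝ) (n : ℕ) : ℝ := (n.factorial : ℝ) * laguerre n α x

lemma lagQ_zero (α x : ℝ) : lagQ α x 0 = 1 := by
  simp [lagQ, laguerre]

lemma lagQ_one (α x : ℝ) : lagQ α x 1 = α + 1 - x := by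
  simp [lagQ, laguerre, Finset.sum_range_succ]
  ring

lemma lagQ_rec (m : ℕ) (α x : ℝ) :
    lagQ α x (m+2) = (2*(m:ℝ)+3+α - x) * lagQ α x (m+1)
      - ((m:ℝ)+1+α)*((m:ℝ)+1) * lagQ α x m := by
  have h := lag_rec m α x
  have f2 : (((m+2).factorial : ℕ) : ℝ) = ((m:ℝ)+2) * (((m+1).factorial : ℕ) : ℝ) := by
    rw [Nat.factorial_succ]; push_cast; ring
  have f1 : (((m+1).factorial : ℕ) : ℝ) = ((m:ℝ)+1) * ((m.factorial : ℕ) : ℝ) := by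
    rw [Nat.factorial_succ]; push_cast; ring
  simp only [lagQ]
  rw [f2, f1]
  linear_combination (((m:ℝ)+1) * ((m.factorial : ℕ) : ℝ)) * h


lemma lag_pos_of_le_V (k : ℕ) (hk : 1 ≤ k) (α : ℝ) (hα : -1 < α) (x : ℝ) (P : ℝ)
    (hP2 : P^2 = (k:ℝ)*((k:ℝ)+α+1)) (hPpos : 0 < P) (hPle : 2*P ≤ 2*(k:ℝ)+α+1)
    (hx : x ≤ 2*(k:ℝ)+α+1 - 2*P) :
    0 < laguerre k α x := by
  have hk1 : (1:ℝ) ≤ (k:ℝ) := by exact_mod_cast hk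
  have claim : ∀ m : ℕ, m + 1 ≤ k →
      0 < lagQ α x m ∧ (k:ℝ)*((m:ℝ)+1+α) * lagQ α x m ≤ P * lagQ α x (m+1) := by
    intro m
    induction m with
    | zero =>
      intro _
      rw [lagQ_zero, lagQ_one]
      refine ⟨one_pos, ?_⟩
      have hD : P * x ≤ P * (2*(k:ℝ)+α+1 - 2*P) := mul_le_mul_of_nonneg_left hx hPpos.le
      have hprod : (0:ℝ) ≤ (k:ℝ) * (2*(k:ℝ)+α+1-2*P) := mul_nonneg (by linarith) (by linarith)
      push_cast
      nlinarith [hD, hP2, hprod]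
    | succ m ih =>
      intro hm2
      obtain ⟨hq0, hle⟩ := ih (by omega)
      have hma : (0:ℝ) < (m:ℝ)+1+α := by
        have : (0:ℝ) ≤ (m:ℝ) := Nat.cast_nonneg m
        linarith
      have hq1 : 0 < lagQ α x (m+1) := by
        have h1 : 0 < (k:ℝ)*((m:ℝ)+1+α) * lagQ α x m := by positivity
        by_contra hcon
        push_neg at hcon
        have h3 : P * lagQ α x (m+1) ≤ 0 := mul_nonpos_iff.mpr (Or.inl ⟨hPpos.le, hcon⟩)
        linarith
      refine ⟨hq1, ?_⟩
      -- key inequalities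
      have hA : P * ((k:ℝ)*((m:ℝ)+1+α) * lagQ α x m) ≤ P * (P * lagQ α x (m+1)) :=
        mul_le_mul_of_nonneg_left hle hPpos.le
      have hB : (k:ℝ) * (((m:ℝ)+1+α) * (P * lagQ α x m)) ≤ (k:ℝ) * (((k:ℝ)+α+1) * lagQ α x (m+1)) := by
        calc (k:ℝ) * (((m:ℝ)+1+α) * (P * lagQ α x m)) = P * ((k:ℝ)*((m:ℝ)+1+α) * lagQ α x m) := by ring
        _ ≤ P * (P * lagQ α x (m+1)) := hA
        _ = (k:ℝ) * (((k:ℝ)+α+1) * lagQ α x (m+1)) := by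
            have : P * (P * lagQ α x (m+1)) = P^2 * lagQ α x (m+1) := by ring
            rw [this, hP2]; ring
      have hB' : ((m:ℝ)+1+α) * (P * lagQ α x m) ≤ ((k:ℝ)+α+1) * lagQ α x (m+1) :=
        le_of_mul_le_mul_left hB (by linarith)
      have hC : ((m:ℝ)+1) * (((m:ℝ)+1+α) * (P * lagQ α x m))
          ≤ ((m:ℝ)+1) * (((k:ℝ)+α+1) * lagQ α x (m+1)) :=
        mul_le_mul_of_nonneg_left hB' (by positivity)
      have hxs : 2*((m:ℝ)+1) - 2*(k:ℝ) + 2*P ≤ 2*(m:ℝ)+3+α-x := by linarith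
      have h5 : (2*((m:ℝ)+1) - 2*(k:ℝ) + 2*P) * (P * lagQ α x (m+1))
          ≤ (2*(m:ℝ)+3+α-x) * (P * lagQ α x (m+1)) :=
        mul_le_mul_of_nonneg_right hxs (mul_nonneg hPpos.le hq1.le)
      have h6 : (2*((m:ℝ)+1) - 2*(k:ℝ) + 2*P) * (P * lagQ α x (m+1))
          = (2*((m:ℝ)+1) - 2*(k:ℝ)) * (P * lagQ α x (m+1))
            + 2*(k:ℝ)*((k:ℝ)+α+1) * lagQ α x (m+1) := by
        linear_combination (2 * lagQ α x (m+1)) * hP2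
      have hkm : (0:ℝ) ≤ (k:ℝ) - (m:ℝ) - 1 := by
        have : ((m:ℝ)+2) ≤ (k:ℝ) := by exact_mod_cast hm2
        linarith
      have h7 : 0 ≤ ((k:ℝ)-(m:ℝ)-1) * ((2*(k:ℝ)+α+1) * lagQ α x (m+1))
            - ((k:ℝ)-(m:ℝ)-1) * (2 * (P * lagQ α x (m+1))) := by
        have : 0 ≤ ((k:ℝ)-(m:ℝ)-1) * (((2*(k:ℝ)+α+1) - 2*P) * lagQ α x (m+1)) :=
          mul_nonneg hkm (mul_nonneg (by linarith) hq1.le)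
        linarith [this, (by ring : ((k:ℝ)-(m:ℝ)-1) * (((2*(k:ℝ)+α+1) - 2*P) * lagQ α x (m+1))
          = ((k:ℝ)-(m:ℝ)-1) * ((2*(k:ℝ)+α+1) * lagQ α x (m+1))
            - ((k:ℝ)-(m:ℝ)-1) * (2 * (P * lagQ α x (m+1))))]
      have hrecP : P * lagQ α x (m+2)
          = (2*(m:ℝ)+3+α-x) * (P * lagQ α x (m+1))
            - ((m:ℝ)+1+α)*((m:ℝ)+1) * (P * lagQ α x m) := by
        rw [lagQ_rec]; ring
      show (k:ℝ)*(((m+1:ℕ):ℝ)+1+α) * lagQ α x (m+1) ≤ P * lagQ α x (m+2)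
      push_cast
      rw [hrecP]
      nlinarith [h5, hC, h6, h7]
  obtain ⟨hq, hle⟩ := claim (k-1) (by omega)
  have hkk : k - 1 + 1 = k := by omega
  rw [hkk] at hle
  have hca : ((k-1:ℕ):ℝ) = (k:ℝ) - 1 := by
    have : (1:ℕ) ≤ k := hk
    push_cast [Nat.cast_sub this]
    ring
  rw [hca] at hle
  have hpos : 0 < (k:ℝ)*((k:ℝ)-1+1+α) * lagQ α x (k-1) := by
    have : (0:ℝ) < (k:ℝ) := by linarith
    have h2 : (0:ℝ) < (k:ℝ)-1+1+α := by linarith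
    positivity
  have hQk : 0 < lagQ α x k := by
    by_contra hcon
    push_neg at hcon
    have h3 : P * lagQ α x k ≤ 0 := mul_nonpos_iff.mpr (Or.inl ⟨hPpos.le, hcon⟩)
    linarith
  have hf : (0:ℝ) < (k.factorial : ℝ) := by exact_mod_cast k.factorial_pos
  rw [lagQ] at hQk
  rcases mul_pos_iff.mp hQk with h | h
  · exact h.2
  · exact absurd h.1 (not_lt.mpr hf.le)

lemma lag_ne_of_ge_U (k : ℕ) (hk : 1 ≤ k) (α : ℝ) (hα : -1 < α) (x : ℝ) (P : ℝ)
    (hP2 : P^2 = (k:ℝ)*((k:ℝ)+α+1)) (hPpos : 0 < P)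
    (hx : 2*(k:ℝ)+α+1 + 2*P ≤ x) :
    laguerre k α x ≠ 0 := by
  have hk1 : (1:ℝ) ≤ (k:ℝ) := by exact_mod_cast hk
  set R : ℕ → ℝ := fun n => (-1:ℝ)^n * lagQ α x n with hR
  have hR0 : R 0 = 1 := by simp [hR, lagQ_zero]
  have hR1 : R 1 = x - α - 1 := by simp [hR, lagQ_one]; ring
  have hRrec : ∀ m : ℕ, R (m+2) = (x - (2*(m:ℝ)+3+α)) * R (m+1)
      - ((m:ℝ)+1+α)*((m:ℝ)+1) * R m := by
    intro m
    have h := lagQ_rec m α x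
    simp only [hR]
    rw [h]
    rw [pow_succ, pow_succ]
    ring
  have claim : ∀ m : ℕ, m + 1 ≤ k →
      0 < R m ∧ (k:ℝ)*((m:ℝ)+1+α) * R m ≤ P * R (m+1) := by
    intro m
    induction m with
    | zero =>
      intro _
      rw [hR0, hR1]
      have hPk : (0:ℝ) < 2*(k:ℝ)+α+1+2*P := by linarith
      refine ⟨one_pos, ?_⟩
      have hD : P * (2*(k:ℝ)+α+1+2*P) ≤ P * x := mul_le_mul_of_nonneg_left hx hPpos.le
      have hp1 : (0:ℝ) ≤ (k:ℝ) * P := mul_nonneg (by linarith) hPpos.le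
      have hp2 : (0:ℝ) ≤ (k:ℝ) * (α+1) := mul_nonneg (by linarith) (by linarith)
      push_cast
      nlinarith [hD, hP2, hp1, hp2, sq_nonneg (k:ℝ)]
    | succ m ih =>
      intro hm2
      obtain ⟨hq0, hle⟩ := ih (by omega)
      have hma : (0:ℝ) < (m:ℝ)+1+α := by
        have : (0:ℝ) ≤ (m:ℝ) := Nat.cast_nonneg m
        linarith
      have hq1 : 0 < R (m+1) := by
        have h1 : 0 < (k:ℝ)*((m:ℝ)+1+α) * R m := by positivity
        by_contra hcon
        push_neg at hcon
        have h3 : P * R (m+1) ≤ 0 := mul_nonpos_iff.mpr (Or.inl ⟨hPpos.le, hcon⟩)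
        linarith
      refine ⟨hq1, ?_⟩
      have hA : P * ((k:ℝ)*((m:ℝ)+1+α) * R m) ≤ P * (P * R (m+1)) :=
        mul_le_mul_of_nonneg_left hle hPpos.le
      have hB : (k:ℝ) * (((m:ℝ)+1+α) * (P * R m)) ≤ (k:ℝ) * (((k:ℝ)+α+1) * R (m+1)) := by
        calc (k:ℝ) * (((m:ℝ)+1+α) * (P * R m)) = P * ((k:ℝ)*((m:ℝ)+1+α) * R m) := by ring
        _ ≤ P * (P * R (m+1)) := hA
        _ = (k:ℝ) * (((k:ℝ)+α+1) * R (m+1)) := by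
            have : P * (P * R (m+1)) = P^2 * R (m+1) := by ring
            rw [this, hP2]; ring
      have hB' : ((m:ℝ)+1+α) * (P * R m) ≤ ((k:ℝ)+α+1) * R (m+1) :=
        le_of_mul_le_mul_left hB (by linarith)
      have hC : ((m:ℝ)+1) * (((m:ℝ)+1+α) * (P * R m))
          ≤ ((m:ℝ)+1) * (((k:ℝ)+α+1) * R (m+1)) :=
        mul_le_mul_of_nonneg_left hB' (by positivity)
      have hkm : (0:ℝ) ≤ (k:ℝ) - (m:ℝ) - 1 := by
        have : ((m:ℝ)+2) ≤ (k:ℝ) := by exact_mod_cast hm2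
        linarith
      have hxs : 2*((k:ℝ)-(m:ℝ)-1) + 2*P ≤ x - (2*(m:ℝ)+3+α) := by linarith
      have h5 : (2*((k:ℝ)-(m:ℝ)-1) + 2*P) * (P * R (m+1))
          ≤ (x - (2*(m:ℝ)+3+α)) * (P * R (m+1)) :=
        mul_le_mul_of_nonneg_right hxs (mul_nonneg hPpos.le hq1.le)
      have h6 : (2*((k:ℝ)-(m:ℝ)-1) + 2*P) * (P * R (m+1))
          = (2*(k:ℝ)-2*(m:ℝ)-2) * (P * R (m+1)) + 2*(k:ℝ)*((k:ℝ)+α+1) * R (m+1) := by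
        linear_combination (2 * R (m+1)) * hP2
      have h7a : 0 ≤ ((k:ℝ)-(m:ℝ)-1) * (2 * (P * R (m+1))) :=
        mul_nonneg hkm (by positivity)
      have h7b : 0 ≤ ((k:ℝ)-(m:ℝ)-1) * ((2*(k:ℝ)+α+1) * R (m+1)) :=
        mul_nonneg hkm (mul_nonneg (by linarith) hq1.le)
      have hrecP : P * R (m+2)
          = (x - (2*(m:ℝ)+3+α)) * (P * R (m+1))
            - ((m:ℝ)+1+α)*((m:ℝ)+1) * (P * R m) := by
        rw [hRrec m]; ring
      show (k:ℝ)*(((m+1:ℕ):ℝ)+1+α) * R (m+1) ≤ P * R (m+2)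
      push_cast
      rw [hrecP]
      nlinarith [h5, hC, h6, h7a, h7b]
  obtain ⟨hq, hle⟩ := claim (k-1) (by omega)
  have hkk : k - 1 + 1 = k := by omega
  rw [hkk] at hle
  have hca : ((k-1:ℕ):ℝ) = (k:ℝ) - 1 := by
    have : (1:ℕ) ≤ k := hk
    push_cast [Nat.cast_sub this]
    ring
  rw [hca] at hle
  have hpos : 0 < (k:ℝ)*((k:ℝ)-1+1+α) * R (k-1) := by
    have h1 : (0:ℝ) < (k:ℝ) := by linarith
    have h2 : (0:ℝ) < (k:ℝ)-1+1+α := by linarith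
    positivity
  have hRk : 0 < R k := by
    by_contra hcon
    push_neg at hcon
    have h3 : P * R k ≤ 0 := mul_nonpos_iff.mpr (Or.inl ⟨hPpos.le, hcon⟩)
    linarith
  intro h0
  have : R k = 0 := by simp [hR, lagQ, h0]
  rw [this] at hRk
  exact lt_irrefl 0 hRk

/-- Every real zero `x` of `L_k^{(α)}` satisfies `V² < x < U²`. -/
theorem laguerre_zeros_in_interval
    (k : ℕ) (hk : 1 ≤ k) (α : ℝ) (hα : -1 < α)
    (V U : ℝ) (hV : V = Real.sqrt ((k : ℝ) + α + 1) - Real.sqrt (k : ℝ))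
    (hU : U = Real.sqrt ((k : ℝ) + α + 1) + Real.sqrt (k : ℝ)) :
    ∀ x : ℝ, laguerre k α x = 0 → V ^ 2 < x ∧ x < U ^ 2 := by
  intro x hx0
  have hk1 : (1:ℝ) ≤ (k:ℝ) := by exact_mod_cast hk
  have hka : (0:ℝ) < (k:ℝ) + α + 1 := by linarith
  set P : ℝ := Real.sqrt ((k:ℝ)*((k:ℝ)+α+1)) with hPdef
  have harg : (0:ℝ) ≤ (k:ℝ)*((k:ℝ)+α+1) := by positivity
  have hP2 : P^2 = (k:ℝ)*((k:ℝ)+α+1) := Real.sq_sqrt harg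
  have hPpos : 0 < P := Real.sqrt_pos.mpr (by nlinarith)
  have hprod : (2*(k:ℝ)+α+1-2*P)*(2*(k:ℝ)+α+1+2*P) = (α+1)^2 := by
    linear_combination (-4 : ℝ) * hP2
  have hPle : 2*P ≤ 2*(k:ℝ)+α+1 := by
    by_contra h
    push_neg at h
    have hneg := mul_neg_of_neg_of_pos
      (by linarith : 2*(k:ℝ)+α+1-2*P < 0) (by linarith : (0:ℝ) < 2*(k:ℝ)+α+1+2*P)
    rw [hprod] at hneg
    nlinarith [sq_nonneg (α+1)]
  have hsq : Real.sqrt ((k:ℝ)+α+1)^2 = (k:ℝ)+α+1 := Real.sq_sqrt hka.le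
  have hsqk : Real.sqrt (k:ℝ)^2 = (k:ℝ) := Real.sq_sqrt (Nat.cast_nonneg k)
  have hPm : P = Real.sqrt (k:ℝ) * Real.sqrt ((k:ℝ)+α+1) := by
    rw [hPdef, Real.sqrt_mul (Nat.cast_nonneg k)]
  have hV2 : V^2 = 2*(k:ℝ)+α+1-2*P := by
    rw [hV]; linear_combination hsq + hsqk + 2*hPm
  have hU2 : U^2 = 2*(k:ℝ)+α+1+2*P := by
    rw [hU]; linear_combination hsq + hsqk - 2*hPm
  constructor
  · by_contra h
    push_neg at h
    rw [hV2] at h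
    have hpos := lag_pos_of_le_V k hk α hα x P hP2 hPpos hPle h
    linarith
  · by_contra h
    push_neg at h
    rw [hU2] at h
    exact lag_ne_of_ge_U k hk α hα x P hP2 hPpos h hx0
end
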